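/- In Y_{d,n}^aff(q), for each i = 1,...,n-1 and all integers a, b with a ≥ b: g_i X_i^a X_{i+1}^b = X_i^b X_{i+1}^a g_i - (q - q^{-1}) e_i Σ_{k=0}^{a-b-1} X_i^{b+k} X_{i+1}^{a-k}; and for a ≤ b: g_i X_i^a X_{i+1}^b = X_i^b X_{i+1}^a g_i + (q - q^{-1}) e_i Σ_{k=0}^{b-a-1} X_i^{a+k} X_{i+1}^{b-k}. -/

import Mathlib

/-!
Put `u = (q - q⁻¹) e_i`; it commutes with `g_i`, `X_i` and `X_{i+1}`, and the quadratic relation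
reads `g_i² = 1 + u g_i`, so `g_i - u` is a right inverse of `g_i`. Hence `X_{i+1} = g_i X_i g_i`
gives `g_i X_i = X_{i+1} g_i - u X_{i+1}` and `g_i X_{i+1} = X_i g_i + u X_{i+1}`, and induction
yields the formulas for `X_i^m` and `X_{i+1}^m`, `m ∈ ℕ`. Since `g_i` commutes with `X_i X_{i+1}`,
the general case follows after factoring out `(X_i X_{i+1})^{min(a, b)}`.
-/

open LaurentPolynomial Finset

noncomputable section

/-- The ring `R = ℂ[q, q⁻¹]` of Laurent polynomials over `ℂ`. -/
abbrev Rq := LaurentPolynomial ℂ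

/-- The indeterminate `q`. -/
def qq : Rq := T 1

/-- `q⁻¹`. -/
def qqinv : Rq := T (-1)

/-- The transposition `s_i = (i, i+1)` acting on the index `j`. -/
def sAdj (i j : ℕ) : ℕ := if j = i then i + 1 else if j = i + 1 then i else j

/-- The transposition `s_{i,l} = (i, l)` acting on the index `j`. -/
def sTrp (i l j : ℕ) : ℕ := if j = i then l else if j = l then i else j

/-- A realisation of the defining presentation of the affine Yokonuma--Hecke
algebra `Y_{d,n}^aff(q)` inside an `R`-algebra `A`:  elements
`t_1, …, t_n`, `g_1, …, g_{n-1}`, `X_1, X_1⁻¹` (together with the derived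
elements `X_2, …, X_n` given by `X_{i+1} = g_i X_i g_i` and their inverses)
satisfying the defining relations (br1), (br2), (fr1)–(fr3), (aff1)–(aff3)
and (quad). -/
structure YHAff (A : Type*) [Ring A] [Algebra Rq A] (d n : ℕ) where
  t : ℕ → A
  g : ℕ → A
  X : ℕ → A
  Xinv : ℕ → A
  br1 : ∀ i j, 1 ≤ i → i ≤ n - 1 → 1 ≤ j → j ≤ n - 1 → (i + 1 < j ∨ j + 1 < i) →
    g i * g j = g j * g i
  br2 : ∀ i, 1 ≤ i → i ≤ n - 2 → g i * g (i + 1) * g i = g (i + 1) * g i * g (i + 1)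
  fr1 : ∀ i j, 1 ≤ i → i ≤ n → 1 ≤ j → j ≤ n → t i * t j = t j * t i
  fr2 : ∀ i j, 1 ≤ i → i ≤ n - 1 → 1 ≤ j → j ≤ n → g i * t j = t (sAdj i j) * g i
  fr3 : ∀ j, 1 ≤ j → j ≤ n → t j ^ d = 1
  aff1 : X 1 * (g 1 * X 1 * g 1) = g 1 * X 1 * g 1 * X 1
  aff2 : ∀ i, 2 ≤ i → i ≤ n - 1 → X 1 * g i = g i * X 1
  aff3 : ∀ j, 1 ≤ j → j ≤ n → X 1 * t j = t j * X 1
  quad : ∀ i, 1 ≤ i → i ≤ n - 1 → g i ^ 2 =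
    1 + algebraMap Rq A (qq - qqinv) *
      (algebraMap Rq A (C (d : ℂ)⁻¹) * ∑ k ∈ range d, t i ^ k * t (i + 1) ^ (d - k)) * g i
  Xrec : ∀ i, 1 ≤ i → i ≤ n - 1 → X (i + 1) = g i * X i * g i
  XXinv : ∀ i, 1 ≤ i → i ≤ n → X i * Xinv i = 1
  XinvX : ∀ i, 1 ≤ i → i ≤ n → Xinv i * X i = 1

variable {A : Type*} [Ring A] [Algebra Rq A] {d n : ℕ}

/-- The idempotent `e_i = (1/d) ∑_{k=0}^{d-1} t_i^k t_{i+1}^{d-k}`. -/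
def YHAff.e (Y : YHAff A d n) (i : ℕ) : A :=
  algebraMap Rq A (C (d : ℂ)⁻¹) * ∑ k ∈ range d, Y.t i ^ k * Y.t (i + 1) ^ (d - k)

/-- The idempotent `e_{i,l} = (1/d) ∑_{k=0}^{d-1} t_i^k t_l^{d-k}`. -/
def YHAff.eil (Y : YHAff A d n) (i l : ℕ) : A :=
  algebraMap Rq A (C (d : ℂ)⁻¹) * ∑ k ∈ range d, Y.t i ^ k * Y.t l ^ (d - k)

/-- The scalar `q - q⁻¹` viewed inside `A`. -/
def cq (A : Type*) [Ring A] [Algebra Rq A] : A := algebraMap Rq A (qq - qqinv)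

/-- `X_i^a` for `a : ℤ`, via `Xinv` for negative exponents. -/
def YHAff.zp (Y : YHAff A d n) (i : ℕ) (a : ℤ) : A :=
  if 0 ≤ a then Y.X i ^ a.toNat else Y.Xinv i ^ (-a).toNat

theorem commute_conj_of_braid {M : Type*} [Monoid M] {s t x : M} (hst : s * t * s = t * s * t)
    (hxt : Commute x t) (hx : Commute x (s * x * s)) :
    Commute (s * x * s) (t * (s * x * s) * t) := by
  have hB : ∀ z, s * (t * (s * z)) = t * (s * (t * z)) := fun z => by
    simp only [← mul_assoc, hst]
  have hX : ∀ z, x * (s * (x * (s * z))) = s * (x * (s * (x * z))) := fun z => by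
    simpa only [mul_assoc] using congrArg (· * z) hx.eq
  have hT : ∀ z, x * (t * z) = t * (x * z) := fun z => by rw [← mul_assoc, hxt.eq, mul_assoc]
  show s * x * s * (t * (s * x * s) * t) = t * (s * x * s) * t * (s * x * s)
  -- a trailing factor `z` makes every subword of a right-associated product a rewritable subterm
  suffices h : ∀ z, s * x * s * (t * (s * x * s) * t) * z = t * (s * x * s) * t * (s * x * s) * z by
    simpa only [mul_one] using h 1
  intro z
  simp only [mul_assoc]
  conv_lhs => rw [hB, hT, ← hT (s * (t * z)), ← hB, hX, hB]
  conv_rhs => rw [hB, hT, ← hT (s * z)]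

theorem Finset.sum_range_tsub_eq_of_apply_zero_eq {M : Type*} [AddCancelCommMonoid M]
    (f : ℕ → M) {d : ℕ} (h : f 0 = f d) : ∑ k ∈ range d, f (d - k) = ∑ k ∈ range d, f k := by
  have hreflect : ∑ k ∈ range d, f (d - k) = ∑ k ∈ range d, f (k + 1) := by
    rw [← sum_range_reflect (fun k => f (k + 1))]
    exact sum_congr rfl fun k hk => by have := mem_range.mp hk; congr 1; omega
  rw [hreflect, ← add_left_inj (f 0), ← sum_range_succ', h, sum_range_succ]

theorem Commute.zpow_add_mul_zpow_add {G : Type*} [Group G] {x y : G} (hxy : Commute x y)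
    (b : ℤ) (s t : ℕ) : x ^ (b + s) * y ^ (b + t) = (x * y) ^ b * (x ^ s * y ^ t) := by
  rw [zpow_add, zpow_add, hxy.mul_zpow, mul_assoc, mul_assoc, ← mul_assoc (x ^ (s : ℤ)),
    (hxy.zpow_zpow s b).eq, mul_assoc, zpow_natCast, zpow_natCast]

theorem Commute.units_zpow_add_mul_zpow_add {M : Type*} [Monoid M] {x y : Mˣ}
    (hxy : Commute x y) (b : ℤ) (s t : ℕ) :
    ((x ^ (b + s) : Mˣ) : M) * (y ^ (b + t) : Mˣ) =
      ((x * y) ^ b : Mˣ) * ((x : M) ^ s * (y : M) ^ t) := by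
  simp only [← Units.val_pow_eq_pow_val, ← Units.val_mul, hxy.zpow_add_mul_zpow_add]

theorem Commute.sum_units_zpow_mul_zpow {R : Type*} [Ring R] {x y : Rˣ} (hxy : Commute x y)
    (b : ℤ) (m : ℕ) :
    ∑ k ∈ range m, ((x ^ (b + k) : Rˣ) : R) * (y ^ (b + m - k) : Rˣ) =
      ((x * y) ^ b : Rˣ) * ∑ k ∈ range m, (x : R) ^ k * (y : R) ^ (m - k) := by
  rw [mul_sum]
  refine sum_congr rfl fun k hk => ?_
  rw [← hxy.units_zpow_add_mul_zpow_add, Nat.cast_sub (mem_range.mp hk).le, add_sub_assoc]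

section QuadraticRelation

variable {R : Type*} [Ring R] {g u x y : R}

theorem mul_eq_sub_of_sq_eq (hq : g * g = 1 + u * g) (hug : Commute u g) (huy : Commute u y)
    (hy : y = g * x * g) : g * x = y * g - u * y := by
  have hinv : g * (g - u) = 1 := by rw [mul_sub, hq, hug.eq, add_sub_cancel_right]
  calc g * x = g * x * g * (g - u) := by rw [mul_assoc (g * x), hinv, mul_one]
    _ = y * g - u * y := by rw [← hy, mul_sub, huy.eq]

theorem mul_eq_add_of_sq_eq (hq : g * g = 1 + u * g) (hy : y = g * x * g) :
    g * y = x * g + u * y := by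
  calc g * y = g * g * (x * g) := by rw [hy]; simp only [mul_assoc]
    _ = x * g + u * y := by rw [hq, add_mul, one_mul, hy]; simp only [mul_assoc]

theorem commute_mul_of_eq_mul_mul (hy : y = g * x * g) (hxy : Commute x y) :
    Commute g (x * y) :=
  calc g * (x * y) = g * x * g * (x * g) := by rw [hy]; simp only [mul_assoc]
    _ = x * y * g := by rw [← hy, ← mul_assoc, hxy.eq]

theorem mul_pow_eq_sub (hgx : g * x = y * g - u * y) (huy : Commute u y) (hxy : Commute x y)
    (m : ℕ) : g * x ^ m = y ^ m * g - u * ∑ k ∈ range m, x ^ k * y ^ (m - k) := by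
  induction m with
  | zero => simp
  | succ m ih =>
    have hsum : (∑ k ∈ range m, x ^ k * y ^ (m - k)) * x =
        ∑ k ∈ range m, x ^ (k + 1) * y ^ (m + 1 - (k + 1)) := by
      rw [sum_mul]
      refine sum_congr rfl fun k _ => ?_
      rw [mul_assoc, ((hxy.pow_right _).eq).symm, ← mul_assoc, ← pow_succ, Nat.add_sub_add_right]
    calc g * x ^ (m + 1) = (g * x ^ m) * x := by rw [pow_succ, mul_assoc]
      _ = y ^ m * (g * x) - u * ((∑ k ∈ range m, x ^ k * y ^ (m - k)) * x) := by
        rw [ih, sub_mul, mul_assoc, mul_assoc]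
      _ = y ^ (m + 1) * g - u * (∑ k ∈ range m, x ^ (k + 1) * y ^ (m + 1 - (k + 1)) +
            x ^ 0 * y ^ (m + 1 - 0)) := by
        rw [hgx, hsum, mul_sub, ← mul_assoc, ← pow_succ, ← mul_assoc, ← (huy.pow_right m).eq,
          mul_assoc, ← pow_succ, pow_zero, one_mul, Nat.sub_zero, mul_add]
        abel
      _ = _ := by rw [sum_range_succ']

theorem mul_pow_eq_add (hgy : g * y = x * g + u * y) (hux : Commute u x) (m : ℕ) :
    g * y ^ m = x ^ m * g + u * ∑ k ∈ range m, x ^ k * y ^ (m - k) := by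
  induction m with
  | zero => simp
  | succ m ih =>
    have hsum : (∑ k ∈ range m, x ^ k * y ^ (m - k)) * y =
        ∑ k ∈ range m, x ^ k * y ^ (m + 1 - k) := by
      rw [sum_mul]
      refine sum_congr rfl fun k hk => ?_
      rw [mul_assoc, ← pow_succ, Nat.sub_add_comm (mem_range.mp hk).le]
    calc g * y ^ (m + 1) = (g * y ^ m) * y := by rw [pow_succ, mul_assoc]
      _ = x ^ m * (g * y) + u * ((∑ k ∈ range m, x ^ k * y ^ (m - k)) * y) := by
        rw [ih, add_mul, mul_assoc, mul_assoc]
      _ = x ^ (m + 1) * g + u * (∑ k ∈ range m, x ^ k * y ^ (m + 1 - k) +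
            x ^ m * y ^ (m + 1 - m)) := by
        rw [hgy, hsum, mul_add, ← mul_assoc, ← pow_succ, ← mul_assoc, ← (hux.pow_right m).eq,
          mul_assoc, Nat.add_sub_cancel_left, pow_one, mul_add]
        abel
      _ = _ := by rw [sum_range_succ]

variable {x y : Rˣ}

theorem mul_zpow_mul_zpow_of_le (hq : g * g = 1 + u * g) (hug : Commute u g)
    (hux : Commute u x) (huy : Commute u y) (hxy : Commute x y) (hy : (y : R) = g * x * g)
    {a b : ℤ} (hab : b ≤ a) :
    g * ((x ^ a : Rˣ) * (y ^ b : Rˣ)) = (x ^ b : Rˣ) * (y ^ a : Rˣ) * g -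
      u * ∑ k ∈ range (a - b).toNat, ((x ^ (b + k) : Rˣ) : R) * (y ^ (a - k) : Rˣ) := by
  obtain ⟨m, rfl⟩ : ∃ m : ℕ, a = b + m := ⟨(a - b).toNat, by omega⟩
  have hxy' : Commute (x : R) y := congrArg Units.val hxy
  have hgZ : Commute g ((x * y) ^ b : Rˣ) :=
    Commute.units_zpow_right (by simpa using commute_mul_of_eq_mul_mul hy hxy') b
  have huZ : Commute u ((x * y) ^ b : Rˣ) :=
    Commute.units_zpow_right (by simpa using hux.mul_right huy) b
  have hxm : ((x ^ (b + m) : Rˣ) : R) * (y ^ b : Rˣ) = ((x * y) ^ b : Rˣ) * (x : R) ^ m := by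
    simpa using hxy.units_zpow_add_mul_zpow_add b m 0
  have hym : ((x ^ b : Rˣ) : R) * (y ^ (b + m) : Rˣ) = ((x * y) ^ b : Rˣ) * (y : R) ^ m := by
    simpa using hxy.units_zpow_add_mul_zpow_add b 0 m
  calc g * ((x ^ (b + m) : Rˣ) * (y ^ b : Rˣ))
      = ((x * y) ^ b : Rˣ) * (g * (x : R) ^ m) := by rw [hxm, ← mul_assoc, hgZ.eq, mul_assoc]
    _ = ((x * y) ^ b : Rˣ) * (y : R) ^ m * g -
          u * (((x * y) ^ b : Rˣ) * ∑ k ∈ range m, (x : R) ^ k * (y : R) ^ (m - k)) := by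
      rw [mul_pow_eq_sub (mul_eq_sub_of_sq_eq hq hug huy hy) huy hxy' m, mul_sub, ← mul_assoc,
        ← mul_assoc, ← huZ.eq, mul_assoc u]
    _ = _ := by
      rw [hym, ← hxy.sum_units_zpow_mul_zpow, add_sub_cancel_left, Int.toNat_natCast]

theorem mul_zpow_mul_zpow_of_ge (hq : g * g = 1 + u * g) (hux : Commute u x)
    (huy : Commute u y) (hxy : Commute x y) (hy : (y : R) = g * x * g) {a b : ℤ} (hab : a ≤ b) :
    g * ((x ^ a : Rˣ) * (y ^ b : Rˣ)) = (x ^ b : Rˣ) * (y ^ a : Rˣ) * g +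
      u * ∑ k ∈ range (b - a).toNat, ((x ^ (a + k) : Rˣ) : R) * (y ^ (b - k) : Rˣ) := by
  obtain ⟨m, rfl⟩ : ∃ m : ℕ, b = a + m := ⟨(b - a).toNat, by omega⟩
  have hxy' : Commute (x : R) y := congrArg Units.val hxy
  have hgZ : Commute g ((x * y) ^ a : Rˣ) :=
    Commute.units_zpow_right (by simpa using commute_mul_of_eq_mul_mul hy hxy') a
  have huZ : Commute u ((x * y) ^ a : Rˣ) :=
    Commute.units_zpow_right (by simpa using hux.mul_right huy) a
  have hxm : ((x ^ (a + m) : Rˣ) : R) * (y ^ a : Rˣ) = ((x * y) ^ a : Rˣ) * (x : R) ^ m := by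
    simpa using hxy.units_zpow_add_mul_zpow_add a m 0
  have hym : ((x ^ a : Rˣ) : R) * (y ^ (a + m) : Rˣ) = ((x * y) ^ a : Rˣ) * (y : R) ^ m := by
    simpa using hxy.units_zpow_add_mul_zpow_add a 0 m
  calc g * ((x ^ a : Rˣ) * (y ^ (a + m) : Rˣ))
      = ((x * y) ^ a : Rˣ) * (g * (y : R) ^ m) := by rw [hym, ← mul_assoc, hgZ.eq, mul_assoc]
    _ = ((x * y) ^ a : Rˣ) * (x : R) ^ m * g +
          u * (((x * y) ^ a : Rˣ) * ∑ k ∈ range m, (x : R) ^ k * (y : R) ^ (m - k)) := by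
      rw [mul_pow_eq_add (mul_eq_add_of_sq_eq hq hy) hux m, mul_add, ← mul_assoc,
        ← mul_assoc, ← huZ.eq, mul_assoc u]
    _ = _ := by
      rw [hxm, ← hxy.sum_units_zpow_mul_zpow, add_sub_cancel_left, Int.toNat_natCast]

end QuadraticRelation

theorem sAdj_self (i : ℕ) : sAdj i i = i + 1 := by simp [sAdj]

theorem sAdj_add_one (i : ℕ) : sAdj i (i + 1) = i := by simp [sAdj]

theorem sAdj_sAdj (i j : ℕ) : sAdj i (sAdj i j) = j := by
  unfold sAdj; split_ifs <;> omega

theorem sAdj_mem_Icc {i j n : ℕ} (hi : 1 ≤ i) (hin : i + 1 ≤ n) (hj : j ∈ Set.Icc 1 n) :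
    sAdj i j ∈ Set.Icc 1 n := by
  obtain ⟨hj1, hjn⟩ := hj
  unfold sAdj; constructor <;> split_ifs <;> omega

namespace YHAff

variable (Y : YHAff A d n)

theorem commute_X_t {m j : ℕ} (hm : 1 ≤ m) (hmn : m ≤ n) (hj : j ∈ Set.Icc 1 n) :
    Commute (Y.X m) (Y.t j) := by
  induction m, hm using Nat.le_induction generalizing j with
  | base => exact Y.aff3 j hj.1 hj.2
  | succ m hm ih =>
    have hs := sAdj_mem_Icc hm hmn hj
    have hg : SemiconjBy (Y.g m) (Y.t j) (Y.t (sAdj m j)) := Y.fr2 m j hm (by omega) hj.1 hj.2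
    have hg' : SemiconjBy (Y.g m) (Y.t (sAdj m j)) (Y.t j) := by
      simpa only [SemiconjBy, sAdj_sAdj] using Y.fr2 m (sAdj m j) hm (by omega) hs.1 hs.2
    rw [Y.Xrec m hm (by omega)]
    exact (hg'.mul_left (ih (by omega) hs)).mul_left hg

theorem commute_g_X_of_lt {m j : ℕ} (hm : 1 ≤ m) (hmj : m < j) (hjn : j ≤ n - 1) :
    Commute (Y.g j) (Y.X m) := by
  induction m, hm using Nat.le_induction with
  | base => exact (Y.aff2 j hmj hjn).symm
  | succ m hm ih =>
    have hgg : Commute (Y.g j) (Y.g m) := Y.br1 j m (by omega) hjn hm (by omega) (Or.inr hmj)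
    rw [Y.Xrec m hm (by omega)]
    exact (hgg.mul_right (ih (by omega))).mul_right hgg

theorem commute_X_X_add_one {m : ℕ} (hm : 1 ≤ m) (hmn : m ≤ n - 1) :
    Commute (Y.X m) (Y.X (m + 1)) := by
  induction m, hm using Nat.le_induction with
  | base => rw [Y.Xrec 1 le_rfl hmn]; exact Y.aff1
  | succ m hm ih =>
    have ih' := ih (by omega)
    rw [Y.Xrec m hm (by omega)] at ih'
    rw [Y.Xrec (m + 1) (by omega) hmn, Y.Xrec m hm (by omega)]
    exact commute_conj_of_braid (Y.br2 m hm (by omega))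
      (Y.commute_g_X_of_lt hm (by omega) hmn).symm ih'

theorem commute_e_of_commute_t {z : A} {i : ℕ} (hi : Commute z (Y.t i))
    (hi' : Commute z (Y.t (i + 1))) : Commute z (Y.e i) :=
  (Algebra.commute_algebraMap_right _ z).mul_right <| Commute.sum_right _ _ _ fun k _ =>
    (hi.pow_right k).mul_right (hi'.pow_right (d - k))

theorem commute_g_e {i : ℕ} (h1 : 1 ≤ i) (h2 : i ≤ n - 1) : Commute (Y.g i) (Y.e i) := by
  have hgt : SemiconjBy (Y.g i) (Y.t i) (Y.t (i + 1)) := by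
    simpa only [SemiconjBy, sAdj_self] using Y.fr2 i i h1 h2 h1 (by omega)
  have hgt' : SemiconjBy (Y.g i) (Y.t (i + 1)) (Y.t i) := by
    simpa only [SemiconjBy, sAdj_add_one] using Y.fr2 i (i + 1) h1 h2 (by omega) (by omega)
  have htt : Commute (Y.t i) (Y.t (i + 1)) := Y.fr1 i (i + 1) h1 (by omega) (by omega) (by omega)
  have hsum : Y.g i * ∑ k ∈ range d, Y.t i ^ k * Y.t (i + 1) ^ (d - k) =
      (∑ k ∈ range d, Y.t i ^ k * Y.t (i + 1) ^ (d - k)) * Y.g i := by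
    -- moving `g` across swaps `t_i` and `t_{i+1}`, i.e. reverses the index `k ↦ d - k`; the
    -- boundary terms agree because `t_i^d = t_{i+1}^d = 1`
    rw [mul_sum, ← sum_range_tsub_eq_of_apply_zero_eq (fun k => Y.t i ^ k * Y.t (i + 1) ^ (d - k))
      (by simp [Y.fr3 i h1 (by omega), Y.fr3 (i + 1) (by omega) (by omega)]), sum_mul]
    refine sum_congr rfl fun k hk => ?_
    rw [((hgt.pow_right k).mul_right (hgt'.pow_right (d - k))).eq,
      Nat.sub_sub_self (mem_range.mp hk).le, (htt.pow_pow _ _).eq]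
  exact (Algebra.commute_algebraMap_right _ (Y.g i)).mul_right hsum

theorem commute_X_e {i m : ℕ} (hi : 1 ≤ i) (hin : i + 1 ≤ n) (hm : 1 ≤ m) (hmn : m ≤ n) :
    Commute (Y.X m) (Y.e i) :=
  Y.commute_e_of_commute_t (Y.commute_X_t hm hmn ⟨hi, by omega⟩)
    (Y.commute_X_t hm hmn ⟨by omega, hin⟩)

def unitX {j : ℕ} (hj1 : 1 ≤ j) (hj2 : j ≤ n) : Aˣ :=
  ⟨Y.X j, Y.Xinv j, Y.XXinv j hj1 hj2, Y.XinvX j hj1 hj2⟩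

theorem zp_eq_unitX_zpow {j : ℕ} (hj1 : 1 ≤ j) (hj2 : j ≤ n) (a : ℤ) :
    Y.zp j a = (Y.unitX hj1 hj2 ^ a : Aˣ) := by
  rcases le_or_gt 0 a with h | h
  · lift a to ℕ using h
    simp [zp, unitX]
  · obtain ⟨m, rfl⟩ : ∃ m : ℕ, a = -(m : ℤ) := ⟨(-a).toNat, by omega⟩
    rw [zp, if_neg (by omega), zpow_neg, zpow_natCast, neg_neg, Int.toNat_natCast, ← inv_pow,
      Units.val_pow_eq_pow_val]
    rfl

end YHAff

theorem stmt12_general {A : Type*} [Ring A] [Algebra Rq A] {d n : ℕ}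
    (Y : YHAff A d n) (i : ℕ) (h1 : 1 ≤ i) (h2 : i ≤ n - 1) (a b : ℤ) :
    (a ≥ b → Y.g i * (Y.zp i a * Y.zp (i + 1) b) =
      Y.zp i b * Y.zp (i + 1) a * Y.g i -
        cq A * Y.e i * ∑ k ∈ range (a - b).toNat,
          Y.zp i (b + k) * Y.zp (i + 1) (a - k)) ∧
    (a ≤ b → Y.g i * (Y.zp i a * Y.zp (i + 1) b) =
      Y.zp i b * Y.zp (i + 1) a * Y.g i +
        cq A * Y.e i * ∑ k ∈ range (b - a).toNat,
          Y.zp i (a + k) * Y.zp (i + 1) (b - k)) := by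
  have hin : i ≤ n := by omega
  have hin' : i + 1 ≤ n := by omega
  have hc (z : A) : Commute (cq A) z := Algebra.commutes _ z
  have hq : Y.g i * Y.g i = 1 + cq A * Y.e i * Y.g i := by rw [← pow_two]; exact Y.quad i h1 h2
  have hug := (hc (Y.g i)).mul_left (Y.commute_g_e h1 h2).symm
  have hux := (hc (Y.X i)).mul_left (Y.commute_X_e h1 hin' h1 hin).symm
  have huy := (hc (Y.X (i + 1))).mul_left (Y.commute_X_e h1 hin' (by omega) hin').symm
  have hxy : Commute (Y.unitX h1 hin) (Y.unitX (by omega) hin') :=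
    Units.ext (Y.commute_X_X_add_one h1 h2)
  simp only [Y.zp_eq_unitX_zpow h1 hin, Y.zp_eq_unitX_zpow (j := i + 1) (by omega) hin']
  exact ⟨mul_zpow_mul_zpow_of_le hq hug hux huy hxy (Y.Xrec i h1 h2),
    mul_zpow_mul_zpow_of_ge hq hux huy hxy (Y.Xrec i h1 h2)⟩

/-- Lemma 1 of Chlouveraki–Sécherre: the formulas for `g_i X_i^a X_{i+1}^b`
with integer exponents `a, b`. -/
theorem stmt12 {A : Type*} [Ring A] [Algebra Rq A] {d n : ℕ} (hd : 0 < d)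
    (Y : YHAff A d n) (i : ℕ) (h1 : 1 ≤ i) (h2 : i ≤ n - 1) (a b : ℤ) :
    (a ≥ b → Y.g i * (Y.zp i a * Y.zp (i + 1) b) =
      Y.zp i b * Y.zp (i + 1) a * Y.g i -
        cq A * Y.e i * ∑ k ∈ range (a - b).toNat,
          Y.zp i (b + k) * Y.zp (i + 1) (a - k)) ∧
    (a ≤ b → Y.g i * (Y.zp i a * Y.zp (i + 1) b) =
      Y.zp i b * Y.zp (i + 1) a * Y.g i +
        cq A * Y.e i * ∑ k ∈ range (b - a).toNat,
          Y.zp i (a + k) * Y.zp (i + 1) (b - k)) :=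
  stmt12_general Y i h1 h2 a b

end
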